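/- arXiv:2005.07221 — 2 statements merged into one kernel-verified Lean document; each statement's English description precedes it below -/
import Mathlib

section
/- Define integers n_1 = 1 and n_{k+1} = n_k + 10^k + 1 for k ≥ 1, sets A_k = {n_k + 1, …, n_k + 10^k}, and the real sequence (b_j)_{j≥1} by b_j = 1/√k if j = n_k and b_j = −1/(10^k·√k) if j ∈ A_k. Let t ∈ (0,1] and let Λ ⊆ ℕ_{≥1} be a finite nonempty t-greedy set for b, i.e. min_{i∈Λ} |b_i| ≥ t·sup_{j∉Λ} |b_j|. Let φ := min{k ≥ 1 : n_k ∉ Λ} (well defined since Λ is finite). Then sup_{N ≥ 1} |∑_{i∈Λ, i ≤ N} b_i| ≥ ∑_{k=1}^{φ−1} 1/√k − ∑_{k=1}^{K} 1/√k, where K := max(0, ⌊log_{10}(√φ / t)⌋) and empty sums are 0. -/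
/-!
Take `N + 1 = n_φ`. The partial sum of `b` over `Λ ∩ [1, n_φ]` contains every peak `n_k`,
`k < φ`, contributing `∑_{k<φ} 1/√k`, and otherwise only points of the blocks `A_k`, `k < φ`.
A point of `A_k` in `Λ` beats the missing peak `n_φ` in the greedy comparison, so
`t/√φ ≤ 1/(10^k √k)`, which forces `10^k ≤ √φ/t`, i.e. `k ≤ K`; and a whole block `A_k`
contributes at least `-10^k/(10^k √k) = -1/√k`.
-/

open Finset

/-- `nn k` is the integer `n_k` of the construction: `n_1 = 1`,
`n_{k+1} = n_k + 10^k + 1` for `k ≥ 1` (the value at `0` is irrelevant). -/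
def nn : ℕ → ℕ
  | 0 => 0
  | 1 => 1
  | (k + 2) => nn (k + 1) + 10 ^ (k + 1) + 1

lemma nn_succ {k : ℕ} (hk : 1 ≤ k) : nn (k + 1) = nn k + 10 ^ k + 1 := by
  obtain ⟨m, rfl⟩ := Nat.exists_eq_add_of_le' hk
  rfl

lemma nn_add_pow_lt_nn {k l : ℕ} (hk : 1 ≤ k) (hkl : k < l) : nn k + 10 ^ k < nn l := by
  induction l, hkl using Nat.le_induction with
  | base => rw [nn_succ hk]; omega
  | succ l hl ih =>
    have := Nat.one_le_pow l 10 (by norm_num)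
    rw [nn_succ (hk.trans (by omega))]; omega

lemma strictMonoOn_nn : StrictMonoOn nn (Set.Ici 1) := fun _ hk _ _ hkl =>
  (Nat.le_add_right _ _).trans_lt (nn_add_pow_lt_nn hk hkl)

lemma one_le_nn {k : ℕ} (hk : 1 ≤ k) : 1 ≤ nn k :=
  strictMonoOn_nn.monotoneOn (le_refl 1) hk hk

def nnIndex (φ i : ℕ) : ℕ := Nat.findGreatest (fun k => nn k ≤ i) φ

lemma nnIndex_spec {φ i : ℕ} (hi : 1 ≤ i) (hiφ : i < nn φ) :
    1 ≤ nnIndex φ i ∧ nnIndex φ i < φ ∧ nn (nnIndex φ i) ≤ i ∧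
      i ≤ nn (nnIndex φ i) + 10 ^ nnIndex φ i := by
  have hφ : 1 ≤ φ := Nat.pos_of_ne_zero (by rintro rfl; simp [nn] at hiφ)
  have h1 : nn 1 ≤ i := hi
  have hk1 : 1 ≤ nnIndex φ i := Nat.le_findGreatest hφ h1
  have hki : nn (nnIndex φ i) ≤ i := Nat.findGreatest_spec (P := fun k => nn k ≤ i) hφ h1
  have hkφ : nnIndex φ i < φ := by
    by_contra! h
    have hφi : nnIndex φ i = φ := (Nat.findGreatest_le φ).antisymm h
    rw [hφi] at hki
    omega
  have hnext : ¬ nn (nnIndex φ i + 1) ≤ i :=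
    Nat.findGreatest_is_greatest (P := fun k => nn k ≤ i) (Nat.lt_succ_self _) hkφ
  rw [nn_succ hk1] at hnext
  exact ⟨hk1, hkφ, hki, by omega⟩

lemma le_toNat_floor_logb {b x : ℝ} (hb : 1 < b) {k : ℕ} (h : b ^ k ≤ x) :
    k ≤ ⌊Real.logb b x⌋.toNat := by
  have hx : 0 < x := (pow_pos (by linarith) k).trans_le h
  have hlog : (k : ℝ) ≤ Real.logb b x := by
    rw [Real.le_logb_iff_rpow_le hb hx]
    exact_mod_cast h
  have : (k : ℤ) ≤ ⌊Real.logb b x⌋ := Int.le_floor.mpr (by exact_mod_cast hlog)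
  omega

lemma le_toNat_floor_logb_of_mul_le {k φ : ℕ} {t : ℝ} (ht : 0 < t) (hk : 1 ≤ k)
    (hφ : 1 ≤ φ) (h : t * (1 / √(φ : ℝ)) ≤ 1 / (10 ^ k * √(k : ℝ))) :
    k ≤ ⌊Real.logb 10 (√(φ : ℝ) / t)⌋.toNat := by
  have hk' : 1 ≤ √(k : ℝ) := Real.one_le_sqrt.mpr (by exact_mod_cast hk)
  have hφ' : 0 < √(φ : ℝ) := Real.sqrt_pos.mpr (by exact_mod_cast hφ)
  refine le_toNat_floor_logb (by norm_num) ?_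
  rw [le_div_iff₀ ht]
  rw [mul_one_div, div_le_div_iff₀ hφ' (by positivity), one_mul] at h
  nlinarith [mul_le_mul_of_nonneg_left hk' (by positivity : (0 : ℝ) ≤ t * 10 ^ k)]

section Blocks

variable (b : ℕ → ℝ)

lemma sum_image_nn (hb1 : ∀ k : ℕ, 1 ≤ k → b (nn k) = 1 / Real.sqrt k) (m : ℕ) :
    ∑ i ∈ (Icc 1 m).image nn, b i = ∑ k ∈ Icc 1 m, 1 / Real.sqrt k := by
  rw [sum_image (strictMonoOn_nn.injOn.mono fun k hk => (mem_Icc.1 hk).1)]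
  exact sum_congr rfl fun k hk => hb1 k (mem_Icc.1 hk).1

variable (hb2 : ∀ k : ℕ, 1 ≤ k → ∀ j : ℕ, nn k < j → j ≤ nn k + 10 ^ k →
      b j = -(1 / (10 ^ k * Real.sqrt k)))
include hb2

lemma neg_inv_sqrt_le_sum_of_subset_Ioc {k : ℕ} (hk : 1 ≤ k) {s : Finset ℕ}
    (hs : s ⊆ Ioc (nn k) (nn k + 10 ^ k)) : -(1 / Real.sqrt k) ≤ ∑ i ∈ s, b i := by
  have hcard : (#s : ℝ) ≤ 10 ^ k := by
    have := card_le_card hs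
    rw [Nat.card_Ioc, Nat.add_sub_cancel_left] at this
    exact_mod_cast this
  have hsk : 0 < Real.sqrt k := Real.sqrt_pos.mpr (by exact_mod_cast hk)
  rw [sum_congr rfl fun i hi => hb2 k hk i (mem_Ioc.1 (hs hi)).1 (mem_Ioc.1 (hs hi)).2,
    sum_const, nsmul_eq_mul]
  calc -(1 / Real.sqrt k) = 10 ^ k * -(1 / (10 ^ k * Real.sqrt k)) := by field_simp
    _ ≤ #s * -(1 / (10 ^ k * Real.sqrt k)) :=
      mul_le_mul_of_nonpos_right hcard (by rw [neg_nonpos]; positivity)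

lemma neg_sum_le_sum_of_mapsTo_blocks {K : ℕ} {s : Finset ℕ} {c : ℕ → ℕ}
    (hc : ∀ i ∈ s, c i ∈ Icc 1 K) (hblock : ∀ i ∈ s, i ∈ Ioc (nn (c i)) (nn (c i) + 10 ^ c i)) :
    -∑ k ∈ Icc 1 K, 1 / Real.sqrt k ≤ ∑ i ∈ s, b i := by
  rw [← sum_fiberwise_of_maps_to hc, ← sum_neg_distrib]
  refine sum_le_sum fun k hk => neg_inv_sqrt_le_sum_of_subset_Ioc b hb2 (mem_Icc.1 hk).1 ?_
  intro i hi
  obtain ⟨his, rfl⟩ := mem_filter.1 hi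
  exact hblock i his

end Blocks

lemma sub_le_sum_filter_le_nn (b : ℕ → ℝ)
    (hb1 : ∀ k : ℕ, 1 ≤ k → b (nn k) = 1 / Real.sqrt k)
    (hb2 : ∀ k : ℕ, 1 ≤ k → ∀ j : ℕ, nn k < j → j ≤ nn k + 10 ^ k →
      b j = -(1 / (10 ^ k * Real.sqrt k)))
    {t : ℝ} (ht0 : 0 < t) {Λ : Finset ℕ} (hpos : ∀ i ∈ Λ, 1 ≤ i)
    (hgreedy : ∀ i ∈ Λ, ∀ j : ℕ, 1 ≤ j → j ∉ Λ → t * |b j| ≤ |b i|)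
    {φ : ℕ} (hφ1 : 1 ≤ φ) (hφ2 : nn φ ∉ Λ) (hφmin : ∀ k : ℕ, 1 ≤ k → k < φ → nn k ∈ Λ) :
    (∑ k ∈ Icc 1 (φ - 1), 1 / Real.sqrt k) -
      (∑ k ∈ Icc 1 (⌊Real.logb 10 (Real.sqrt φ / t)⌋.toNat), 1 / Real.sqrt k)
    ≤ ∑ i ∈ Λ.filter (· ≤ nn φ), b i := by
  set F := Λ.filter (· ≤ nn φ)
  set P := (Icc 1 (φ - 1)).image nn
  have hPF : P ⊆ F := by
    simp only [P, F, subset_iff, mem_image, mem_Icc, mem_filter]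
    rintro _ ⟨k, hk, rfl⟩
    exact ⟨hφmin k hk.1 (by omega), strictMonoOn_nn.monotoneOn hk.1 hφ1 (by omega)⟩
  have hblock : ∀ i ∈ F \ P, nnIndex φ i ∈ Icc 1 (⌊Real.logb 10 (Real.sqrt φ / t)⌋.toNat) ∧
      i ∈ Ioc (nn (nnIndex φ i)) (nn (nnIndex φ i) + 10 ^ nnIndex φ i) := by
    intro i hi
    simp only [F, P, mem_sdiff, mem_filter, mem_image, mem_Icc, not_exists, not_and] at hi
    obtain ⟨⟨hiΛ, hiφ⟩, hiP⟩ := hi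
    have hiφ' : i < nn φ := hiφ.lt_of_ne (by rintro rfl; exact hφ2 hiΛ)
    obtain ⟨hk1, hkφ, hki, hik⟩ := nnIndex_spec (hpos i hiΛ) hiφ'
    have hki' : nn (nnIndex φ i) < i :=
      hki.lt_of_ne fun h => hiP _ ⟨hk1, by omega⟩ h
    have hcmp := hgreedy i hiΛ (nn φ) (one_le_nn hφ1) hφ2
    rw [hb2 _ hk1 i hki' hik, hb1 φ hφ1, abs_neg, abs_of_nonneg (by positivity),
      abs_of_nonneg (by positivity)] at hcmp
    exact ⟨mem_Icc.2 ⟨hk1, le_toNat_floor_logb_of_mul_le ht0 hk1 hφ1 hcmp⟩,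
      mem_Ioc.2 ⟨hki', hik⟩⟩
  rw [← sum_sdiff hPF, sum_image_nn b hb1]
  linarith [neg_sum_le_sum_of_mapsTo_blocks b hb2 (fun i hi => (hblock i hi).1)
    fun i hi => (hblock i hi).2]

lemma bddAbove_range_abs_sum_filter {ι : Type*} (s : Finset ι) (g : ι → ℝ)
    (p : ℕ → ι → Prop) [∀ N, DecidablePred (p N)] :
    BddAbove (Set.range fun N => |∑ i ∈ s.filter (p N), g i|) := by
  refine ⟨∑ i ∈ s, |g i|, ?_⟩
  rintro _ ⟨N, rfl⟩
  exact (abs_sum_le_sum_abs _ _).trans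
    (sum_le_sum_of_subset_of_nonneg (filter_subset _ _) fun i _ _ => abs_nonneg _)

theorem stmt_3_general (b : ℕ → ℝ)
    (hb1 : ∀ k : ℕ, 1 ≤ k → b (nn k) = 1 / Real.sqrt k)
    (hb2 : ∀ k : ℕ, 1 ≤ k → ∀ j : ℕ, nn k < j → j ≤ nn k + 10 ^ k →
      b j = -(1 / (10 ^ k * Real.sqrt k)))
    (t : ℝ) (ht0 : 0 < t)
    (Λ : Finset ℕ) (hpos : ∀ i ∈ Λ, 1 ≤ i)
    (hgreedy : ∀ i ∈ Λ, ∀ j : ℕ, 1 ≤ j → j ∉ Λ → t * |b j| ≤ |b i|)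
    (φ : ℕ) (hφ1 : 1 ≤ φ) (hφ2 : nn φ ∉ Λ)
    (hφmin : ∀ k : ℕ, 1 ≤ k → k < φ → nn k ∈ Λ) :
    (∑ k ∈ Finset.Icc 1 (φ - 1), 1 / Real.sqrt k) -
      (∑ k ∈ Finset.Icc 1 (⌊Real.logb 10 (Real.sqrt φ / t)⌋.toNat), 1 / Real.sqrt k)
    ≤ ⨆ N : ℕ, |∑ i ∈ Λ.filter (fun i => i ≤ N + 1), b i| := by
  have hN : nn φ - 1 + 1 = nn φ := Nat.sub_add_cancel (one_le_nn hφ1)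
  calc _ ≤ ∑ i ∈ Λ.filter (· ≤ nn φ), b i :=
        sub_le_sum_filter_le_nn b hb1 hb2 ht0 hpos hgreedy hφ1 hφ2 hφmin
    _ ≤ |∑ i ∈ Λ.filter (fun i => i ≤ nn φ - 1 + 1), b i| := by rw [hN]; exact le_abs_self _
    _ ≤ _ := le_ciSup (bddAbove_range_abs_sum_filter Λ b fun N i => i ≤ N + 1) (nn φ - 1)

/-- Lower bound for the norm of a weak greedy sum of the element `b`:
if `Λ` is a finite nonempty `t`-greedy set for `b` and
`φ = min{k ≥ 1 : n_k ∉ Λ}`, then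
`sup_{N ≥ 1} |∑_{i ∈ Λ, i ≤ N} b_i| ≥ ∑_{k=1}^{φ-1} 1/√k − ∑_{k=1}^{K} 1/√k`,
where `K = max(0, ⌊log₁₀(√φ / t)⌋)`. -/
theorem stmt_3 (b : ℕ → ℝ)
    (hb1 : ∀ k : ℕ, 1 ≤ k → b (nn k) = 1 / Real.sqrt k)
    (hb2 : ∀ k : ℕ, 1 ≤ k → ∀ j : ℕ, nn k < j → j ≤ nn k + 10 ^ k →
      b j = -(1 / (10 ^ k * Real.sqrt k)))
    (t : ℝ) (ht0 : 0 < t) (ht1 : t ≤ 1)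
    (Λ : Finset ℕ) (hne : Λ.Nonempty) (hpos : ∀ i ∈ Λ, 1 ≤ i)
    (hgreedy : ∀ i ∈ Λ, ∀ j : ℕ, 1 ≤ j → j ∉ Λ → t * |b j| ≤ |b i|)
    (φ : ℕ) (hφ1 : 1 ≤ φ) (hφ2 : nn φ ∉ Λ)
    (hφmin : ∀ k : ℕ, 1 ≤ k → k < φ → nn k ∈ Λ) :
    (∑ k ∈ Finset.Icc 1 (φ - 1), 1 / Real.sqrt k) -
      (∑ k ∈ Finset.Icc 1 (⌊Real.logb 10 (Real.sqrt φ / t)⌋.toNat), 1 / Real.sqrt k)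
    ≤ ⨆ N : ℕ, |∑ i ∈ Λ.filter (fun i => i ≤ N + 1), b i| :=
  stmt_3_general b hb1 hb2 t ht0 Λ hpos hgreedy φ hφ1 hφ2 hφmin
end

section
/- Let X be a real Banach space with a semi-normalized Markushevich basis (e_i, e*_i) which is a Schauder basis with basis constant K, let t ∈ (0,1], and let n = (n_k) be a strictly increasing sequence of positive integers. Suppose the basis is C-n-t-quasi-greedy. Then for every k ∈ ℕ, every integer l ≥ 2, every x ∈ X, and every t-greedy set A for x with n_k ≤ |A| < l·n_k, one has ‖P_A(x)‖ ≤ 2·C·K·(l − 1 + K)·‖x‖. -/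
/-!
Write `N = n_k`. Cutting from the top, split `A` into at most `l - 1` blocks `A ∩ [b, c)` of
exactly `N` points and a remainder of fewer than `N` points at the bottom. For an interval `I`,
`A ∩ I` is `t`-greedy for `P_I x` and `P_{A ∩ I} x = P_{A ∩ I} (P_I x)`, so each block costs at
most `C‖P_{[b,c)} x‖ ≤ 2CK‖x‖`. The remainder is an initial segment of the first `N` points
`D = A ∩ [0, d)` of `A`, so it costs at most `K‖P_D x‖ ≤ KC‖P_{[0,d)} x‖ ≤ CK²‖x‖`.
-/

open Finset

/-- Coordinate projection `P_A x = ∑_{i ∈ A} e*_i(x) • e_i`. -/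
noncomputable def proj {X : Type*} [NormedAddCommGroup X] [NormedSpace ℝ X]
    (e : ℕ → X) (f : ℕ → X →L[ℝ] ℝ) (A : Finset ℕ) (x : X) : X :=
  ∑ i ∈ A, f i x • e i

/-- `A` is a `t`-greedy set for `x`:
`min_{i ∈ A} |e*_i(x)| ≥ t · sup_{j ∉ A} |e*_j(x)|`. -/
def IsGreedySet {X : Type*} [NormedAddCommGroup X] [NormedSpace ℝ X]
    (f : ℕ → X →L[ℝ] ℝ) (t : ℝ) (x : X) (A : Finset ℕ) : Prop :=
  ∀ i ∈ A, ∀ j ∉ A, t * |f j x| ≤ |f i x|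

section Biorthogonal

variable {X : Type*} [NormedAddCommGroup X] [NormedSpace ℝ X] {e : ℕ → X} {f : ℕ → X →L[ℝ] ℝ}

lemma apply_proj (hbio : ∀ k i, f k (e i) = if k = i then 1 else 0) (A : Finset ℕ) (x : X)
    (i : ℕ) : f i (proj e f A x) = if i ∈ A then f i x else 0 := by
  simp only [proj, map_sum, map_smul, hbio, smul_eq_mul, mul_ite, mul_one, mul_zero]
  exact sum_ite_eq A i fun j => f j x

lemma proj_proj (hbio : ∀ k i, f k (e i) = if k = i then 1 else 0) (A B : Finset ℕ) (x : X) :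
    proj e f A (proj e f B x) = proj e f (A ∩ B) x := by
  refine (sum_congr rfl fun i _ => ?_).trans (sum_ite_mem A B fun i => f i x • e i)
  rw [apply_proj hbio, ite_smul, zero_smul]

lemma proj_union {A B : Finset ℕ} (h : Disjoint A B) (x : X) :
    proj e f (A ∪ B) x = proj e f A x + proj e f B x :=
  sum_union h

lemma isGreedySet_of_mem (hbio : ∀ k i, f k (e i) = if k = i then 1 else 0) (t : ℝ)
    {A : Finset ℕ} {i : ℕ} (hi : i ∈ A) : IsGreedySet f t (e i) A := by
  intro _ _ j hj
  have hji : j ≠ i := fun h => hj (h ▸ hi)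
  simp [hbio, hji]

lemma IsGreedySet.inter_proj (hbio : ∀ k i, f k (e i) = if k = i then 1 else 0) {t : ℝ} {x : X}
    {A : Finset ℕ} (hA : IsGreedySet f t x A) (S : Finset ℕ) :
    IsGreedySet f t (proj e f S x) (A ∩ S) := by
  intro i hi j hj
  obtain ⟨hiA, hiS⟩ := mem_inter.mp hi
  rw [apply_proj hbio, apply_proj hbio, if_pos hiS]
  by_cases hjS : j ∈ S
  · rw [if_pos hjS]
    exact hA i hiA j fun hjA => hj (mem_inter.mpr ⟨hjA, hjS⟩)
  · simp [hjS]

lemma norm_proj_Ico_le {K : ℝ} (hS : ∀ (y : X) (m : ℕ), ‖proj e f (range m) y‖ ≤ K * ‖y‖)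
    {a b : ℕ} (hab : a ≤ b) (x : X) : ‖proj e f (Ico a b) x‖ ≤ 2 * K * ‖x‖ := by
  have h : proj e f (Ico a b) x = proj e f (range b) x - proj e f (range a) x :=
    eq_sub_of_add_eq' (sum_range_add_sum_Ico _ hab)
  rw [h]
  linarith [norm_sub_le (proj e f (range b) x) (proj e f (range a) x), hS x a, hS x b]

lemma norm_proj_inter_le (hbio : ∀ k i, f k (e i) = if k = i then 1 else 0) {t C : ℝ} {N : ℕ}
    (hqg : ∀ (y : X) (B : Finset ℕ), IsGreedySet f t y B → #B = N → ‖proj e f B y‖ ≤ C * ‖y‖)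
    {x : X} {A : Finset ℕ} (hA : IsGreedySet f t x A) {S : Finset ℕ} (hcard : #(A ∩ S) = N) :
    ‖proj e f (A ∩ S) x‖ ≤ C * ‖proj e f S x‖ := by
  have h := hqg _ _ (hA.inter_proj hbio S) hcard
  rwa [proj_proj hbio, inter_assoc, inter_self] at h

end Biorthogonal

section Counting

lemma card_inter_range_mono (A : Finset ℕ) {a b : ℕ} (h : a ≤ b) :
    #(A ∩ range a) ≤ #(A ∩ range b) :=
  card_le_card (inter_subset_inter_left (range_subset_range.mpr h))

lemma exists_le_card_inter_range_eq (A : Finset ℕ) {c j : ℕ} (hj : j ≤ #(A ∩ range c)) :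
    ∃ d ≤ c, #(A ∩ range d) = j := by
  induction c with
  | zero => exact ⟨0, le_rfl, by simp only [range_zero, inter_empty, card_empty] at hj ⊢; omega⟩
  | succ c ih =>
    have hstep : #(A ∩ range (c + 1)) ≤ #(A ∩ range c) + 1 := by
      rw [range_add_one]
      by_cases hc : c ∈ A
      · rw [inter_insert_of_mem hc]
        exact card_insert_le _ _
      · rw [inter_insert_of_notMem hc]
        exact Nat.le_succ _
    by_cases hjc : j ≤ #(A ∩ range c)
    · obtain ⟨d, hdc, hd⟩ := ih hjc
      exact ⟨d, hdc.trans c.le_succ, hd⟩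
    · exact ⟨c + 1, le_rfl, by omega⟩

lemma inter_range_eq_union (A : Finset ℕ) {a b : ℕ} (hab : a ≤ b) :
    A ∩ range b = A ∩ range a ∪ A ∩ Ico a b := by
  rw [← inter_union_distrib_left, range_eq_Ico, range_eq_Ico, Ico_union_Ico_eq_Ico a.zero_le hab]

lemma disjoint_inter_range_inter_Ico (A : Finset ℕ) (a b : ℕ) :
    Disjoint (A ∩ range a) (A ∩ Ico a b) := by
  rw [range_eq_Ico]
  exact (Ico_disjoint_Ico_consecutive 0 a b).mono inter_subset_right inter_subset_right

lemma inter_range_sup_succ (A : Finset ℕ) : A ∩ range (A.sup id).succ = A :=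
  inter_eq_left.mpr A.subset_range_sup_succ

end Counting

section BlockEstimate

variable {X : Type*} [NormedAddCommGroup X] [NormedSpace ℝ X] {e : ℕ → X} {f : ℕ → X →L[ℝ] ℝ}
  {K C t : ℝ} {N : ℕ} {x : X} {A : Finset ℕ}

lemma norm_proj_inter_range_le_of_card_lt (hbio : ∀ k i, f k (e i) = if k = i then 1 else 0)
    (hK : 0 ≤ K) (hC : 0 ≤ C) (hS : ∀ (y : X) (m : ℕ), ‖proj e f (range m) y‖ ≤ K * ‖y‖)
    (hqg : ∀ (y : X) (B : Finset ℕ), IsGreedySet f t y B → #B = N → ‖proj e f B y‖ ≤ C * ‖y‖)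
    (hA : IsGreedySet f t x A) (hN : N ≤ #A) {c : ℕ} (hc : #(A ∩ range c) < N) :
    ‖proj e f (A ∩ range c) x‖ ≤ C * K ^ 2 * ‖x‖ := by
  obtain ⟨d, -, hd⟩ := exists_le_card_inter_range_eq A (c := (A.sup id).succ) (j := N)
    (by rwa [inter_range_sup_succ])
  have hcd : c ≤ d := by
    by_contra! hdc
    have := card_inter_range_mono A hdc.le
    omega
  have hsplit : A ∩ range c = range c ∩ (A ∩ range d) := by
    rw [inter_left_comm, inter_eq_left.mpr (range_subset_range.mpr hcd)]
  rw [hsplit, ← proj_proj hbio]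
  calc ‖proj e f (range c) (proj e f (A ∩ range d) x)‖
      ≤ K * ‖proj e f (A ∩ range d) x‖ := hS _ c
    _ ≤ K * (C * (K * ‖x‖)) := by
        gcongr
        exact (norm_proj_inter_le hbio hqg hA hd).trans (by gcongr; exact hS x d)
    _ = C * K ^ 2 * ‖x‖ := by ring

lemma norm_proj_inter_range_le (hbio : ∀ k i, f k (e i) = if k = i then 1 else 0)
    (hK : 0 ≤ K) (hC : 0 ≤ C) (hS : ∀ (y : X) (m : ℕ), ‖proj e f (range m) y‖ ≤ K * ‖y‖)
    (hqg : ∀ (y : X) (B : Finset ℕ), IsGreedySet f t y B → #B = N → ‖proj e f B y‖ ≤ C * ‖y‖)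
    (hA : IsGreedySet f t x A) (hN : N ≤ #A) (j : ℕ) {c : ℕ} (hc : #(A ∩ range c) < (j + 1) * N) :
    ‖proj e f (A ∩ range c) x‖ ≤ (2 * C * K * j + C * K ^ 2) * ‖x‖ := by
  induction j generalizing c with
  | zero =>
    simpa using norm_proj_inter_range_le_of_card_lt hbio hK hC hS hqg hA hN (by simpa using hc)
  | succ j ih =>
    have hCK : 0 ≤ C * K * ‖x‖ := by positivity
    by_cases hsmall : #(A ∩ range c) < (j + 1) * N
    · refine (ih hsmall).trans ?_
      push_cast
      nlinarith
    have hNj : N ≤ (j + 1) * N := Nat.le_mul_of_pos_left N j.succ_pos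
    have hjN : (j + 1 + 1) * N = (j + 1) * N + N := by ring
    obtain ⟨b, hbc, hb⟩ :=
      exists_le_card_inter_range_eq A (c := c) (j := #(A ∩ range c) - N) (by omega)
    have hdisj := disjoint_inter_range_inter_Ico A b c
    have hblock : #(A ∩ Ico b c) = N := by
      have := card_union_of_disjoint hdisj
      rw [← inter_range_eq_union A hbc, hb] at this
      omega
    rw [inter_range_eq_union A hbc, proj_union hdisj]
    calc ‖proj e f (A ∩ range b) x + proj e f (A ∩ Ico b c) x‖
        ≤ ‖proj e f (A ∩ range b) x‖ + ‖proj e f (A ∩ Ico b c) x‖ := norm_add_le _ _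
      _ ≤ (2 * C * K * j + C * K ^ 2) * ‖x‖ + C * (2 * K * ‖x‖) := by
          gcongr
          · exact ih (by omega)
          · exact (norm_proj_inter_le hbio hqg hA hblock).trans
              (by gcongr; exact norm_proj_Ico_le hS hbc x)
      _ = (2 * C * K * ↑(j + 1) + C * K ^ 2) * ‖x‖ := by push_cast; ring

end BlockEstimate

theorem stmt_5_general {X : Type*} [NormedAddCommGroup X] [NormedSpace ℝ X]
    (e : ℕ → X) (f : ℕ → X →L[ℝ] ℝ)
    (hbio : ∀ k i, f k (e i) = if k = i then 1 else 0)
    (K : ℝ)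
    (hSchauder : ∀ (x : X) (m : ℕ), ‖∑ i ∈ Finset.range m, f i x • e i‖ ≤ K * ‖x‖)
    (t : ℝ)
    (n : ℕ → ℕ)
    (C : ℝ)
    (hqg : ∀ (x : X) (A : Finset ℕ), IsGreedySet f t x A → (∃ k, A.card = n k) →
      ‖proj e f A x‖ ≤ C * ‖x‖) :
    ∀ (k : ℕ) (l : ℕ), 2 ≤ l → ∀ (x : X) (A : Finset ℕ), IsGreedySet f t x A →
      n k ≤ A.card → A.card < l * n k →
      ‖proj e f A x‖ ≤ 2 * C * K * ((l : ℝ) - 1 + K) * ‖x‖ := by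
  intro k l _ x A hA hNA hAl
  have hqgk : ∀ (y : X) (B : Finset ℕ), IsGreedySet f t y B → #B = n k →
      ‖proj e f B y‖ ≤ C * ‖y‖ := fun y B hB hcard => hqg y B hB ⟨k, hcard⟩
  have he0 : 0 < ‖e 0‖ := norm_pos_iff.mpr fun h => by simpa [h] using hbio 0 0
  have hK : 0 ≤ K := nonneg_of_mul_nonneg_left ((norm_nonneg _).trans (hSchauder (e 0) 0)) he0
  have hC : 0 ≤ C := by
    have h0 : 0 ∈ range (n k) := mem_range.mpr (Nat.pos_of_ne_zero fun h => by simp [h] at hAl)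
    exact nonneg_of_mul_nonneg_left ((norm_nonneg _).trans
      (hqgk _ _ (isGreedySet_of_mem hbio t h0) (card_range _))) he0
  obtain ⟨j, rfl⟩ : ∃ j, l = j + 1 := ⟨l - 1, by omega⟩
  have h := norm_proj_inter_range_le hbio hK hC hSchauder hqgk hA hNA j
    (c := (A.sup id).succ) (by rwa [inter_range_sup_succ])
  rw [inter_range_sup_succ] at h
  refine h.trans ?_
  push_cast
  have : 0 ≤ C * K ^ 2 * ‖x‖ := by positivity
  nlinarith

/-- If a Schauder basis with basis constant `K` is `C`-`n`-`t`-quasi-greedy,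
then for every `k`, every `l ≥ 2` and every `t`-greedy set `A` with
`n_k ≤ |A| < l·n_k` one has `‖P_A(x)‖ ≤ 2CK(l − 1 + K)‖x‖`. -/
theorem stmt_5 {X : Type*} [NormedAddCommGroup X] [NormedSpace ℝ X] [CompleteSpace X]
    (e : ℕ → X) (f : ℕ → X →L[ℝ] ℝ)
    (hdense : Dense (Submodule.span ℝ (Set.range e) : Set X))
    (hbio : ∀ k i, f k (e i) = if k = i then 1 else 0)
    (htotal : ∀ x : X, (∀ i, f i x = 0) → x = 0)
    (hb1 : BddAbove (Set.range fun i => ‖e i‖))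
    (hb2 : BddAbove (Set.range fun i => ‖f i‖))
    (K : ℝ)
    (hSchauder : ∀ (x : X) (m : ℕ), ‖∑ i ∈ Finset.range m, f i x • e i‖ ≤ K * ‖x‖)
    (t : ℝ) (ht0 : 0 < t) (ht1 : t ≤ 1)
    (n : ℕ → ℕ) (hn : StrictMono n) (hnpos : ∀ k, 0 < n k)
    (C : ℝ)
    (hqg : ∀ (x : X) (A : Finset ℕ), IsGreedySet f t x A → (∃ k, A.card = n k) →
      ‖proj e f A x‖ ≤ C * ‖x‖) :
    ∀ (k : ℕ) (l : ℕ), 2 ≤ l → ∀ (x : X) (A : Finset ℕ), IsGreedySet f t x A →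
      n k ≤ A.card → A.card < l * n k →
      ‖proj e f A x‖ ≤ 2 * C * K * ((l : ℝ) - 1 + K) * ‖x‖ :=
  stmt_5_general e f hbio K hSchauder t n C hqg
end
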